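/- Let C be a category, n ≥ 2, and F : C_n ⥤ C a functor with the pullback property. Let Ĉ_n be the full subposet of C_n on the proper subintervals, i.e. on all (i,j) with (i,j) ≠ (0,n). Then the cone over the restriction of F to Ĉ_n with apex F(0,n), whose legs are the structure maps F(0,n) → F(i,j) induced by the poset order, is a limit cone. (In other words, for n ≥ 2 an n-cell of Span(C), regarded as a functor C_n ⥤ C, is a limit cone of its restriction to Ĉ_n.) -/

import Mathlib

open CategoryTheory Simplicial Limits

universe v u

/-- The poset `C_n` of nonempty subintervals `[i,j]` of `{0,…,n}`, ordered by reverse inclusion: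
`(i,j) ≤ (i',j')` iff `i ≤ i'` and `j' ≤ j`. -/
abbrev IntervalPoset (n : ℕ) :=
  {p : Fin (n + 1) × (Fin (n + 1))ᵒᵈ // p.1 ≤ OrderDual.ofDual p.2}

/-- The interval `[i,j]` as an element of `IntervalPoset n`. -/
def interval {n : ℕ} (i j : Fin (n + 1)) (h : i ≤ j) : IntervalPoset n :=
  ⟨(i, OrderDual.toDual j), h⟩

/-- A functor `F : C_n ⥤ C` has the pullback property if for all `i ≤ k ≤ l ≤ j` the square
with corners `F(i,j)`, `F(i,l)`, `F(k,j)`, `F(k,l)` is a pullback square. -/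
def PullbackProperty {C : Type u} [Category.{v} C] {n : ℕ} (F : IntervalPoset n ⥤ C) : Prop :=
  ∀ (i k l j : Fin (n + 1)) (hik : i ≤ k) (hkl : k ≤ l) (hlj : l ≤ j),
    IsPullback
      (F.map (homOfLE (show interval i j ((hik.trans hkl).trans hlj) ≤
        interval i l (hik.trans hkl) from ⟨le_refl i, hlj⟩)))
      (F.map (homOfLE (show interval i j ((hik.trans hkl).trans hlj) ≤
        interval k j (hkl.trans hlj) from ⟨hik, le_refl j⟩)))
      (F.map (homOfLE (show interval i l (hik.trans hkl) ≤
        interval k l hkl from ⟨hik, le_refl l⟩)))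
      (F.map (homOfLE (show interval k j (hkl.trans hlj) ≤
        interval k l hkl from ⟨le_refl k, hlj⟩)))

/-- The poset `Ĉ_n` of proper subintervals of `{0,…,n}`, i.e. those distinct from `[0,n]`. -/
abbrev ProperIntervalPoset (n : ℕ) :=
  {p : IntervalPoset n // p ≠ interval 0 (Fin.last n) (Fin.zero_le _)}

/-- The inclusion functor `Ĉ_n ⥤ C_n`. -/
def properInclusion (n : ℕ) : ProperIntervalPoset n ⥤ IntervalPoset n :=
  Monotone.functor (f := Subtype.val) fun _ _ h => h

/-- The cone over the restriction of `F : C_n ⥤ C` to `Ĉ_n`, with apex `F(0,n)` and legs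
the structure maps induced by the poset order. -/
def properCone {C : Type u} [Category.{v} C] {n : ℕ} (F : IntervalPoset n ⥤ C) :
    Cone (properInclusion n ⋙ F) where
  pt := F.obj (interval 0 (Fin.last n) (Fin.zero_le _))
  π :=
    { app := fun p => F.map (homOfLE ⟨Fin.zero_le _, Fin.le_last _⟩)
      naturality := fun p q f => by
        dsimp
        rw [Category.id_comp, ← F.map_comp]
        rfl }

/-!
Every proper subinterval of `[0,n]` lies in `[0,n-1]` or in `[1,n]`, so a cone over `Ĉ_n` is
determined by its legs to these two intervals, which agree on `[1,n-1]` (nonempty as `n ≥ 2`).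
The pullback property for `0 ≤ 1 ≤ n-1 ≤ n` says exactly that `F(0,n)` is universal for such
pairs of legs.
-/

namespace CategoryTheory.Limits.Cone

variable {J : Type*} [Preorder J] {C : Type u} [Category.{v} C] {D : J ⥤ C}

noncomputable def isLimitOfIsPullback (s : Cone D) {a b c : J} (hac : a ≤ c) (hbc : b ≤ c)
    (hcover : ∀ j, a ≤ j ∨ b ≤ j)
    (h : IsPullback (s.π.app a) (s.π.app b) (D.map (homOfLE hac)) (D.map (homOfLE hbc))) :
    IsLimit s where
  lift t := h.lift (t.π.app a) (t.π.app b) (by rw [t.w, t.w])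
  fac t j := by
    rcases hcover j with haj | hbj
    · rw [← s.w (homOfLE haj), ← Category.assoc, h.lift_fst, t.w]
    · rw [← s.w (homOfLE hbj), ← Category.assoc, h.lift_snd, t.w]
  uniq t m hm := h.hom_ext (by rw [hm, h.lift_fst]) (by rw [hm, h.lift_snd])

end CategoryTheory.Limits.Cone

namespace ProperIntervalPoset

variable {n : ℕ}

def dropLast (hn : 1 ≤ n) : ProperIntervalPoset n :=
  ⟨interval 0 ⟨n - 1, by omega⟩ (Fin.zero_le _), fun h => by
    have := congrArg (fun p => (OrderDual.ofDual p.1.2).val) h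
    simp [interval] at this
    omega⟩

def dropFirst (hn : 1 ≤ n) : ProperIntervalPoset n :=
  ⟨interval ⟨1, by omega⟩ (Fin.last n) (Fin.le_last _), fun h => by
    have := congrArg (fun p => p.1.1.val) h
    simp [interval] at this⟩

def dropFirstLast (hn : 2 ≤ n) : ProperIntervalPoset n :=
  ⟨interval ⟨1, by omega⟩ ⟨n - 1, by omega⟩ (by simp [Fin.le_def]; omega), fun h => by
    have := congrArg (fun p => p.1.1.val) h
    simp [interval] at this⟩

theorem dropLast_le_or_dropFirst_le (hn : 1 ≤ n) (p : ProperIntervalPoset n) :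
    dropLast hn ≤ p ∨ dropFirst hn ≤ p := by
  obtain ⟨⟨⟨i, j⟩, hij⟩, hp⟩ := p
  by_cases hi : i = 0
  · refine Or.inl ⟨Fin.zero_le _, ?_⟩
    have hj : (OrderDual.ofDual j).val ≠ n := fun hj =>
      hp (by subst hi; ext <;> simp [interval, hj])
    change (OrderDual.ofDual j).val ≤ n - 1
    omega
  · exact Or.inr ⟨Fin.pos_iff_ne_zero.mpr hi, Fin.le_last _⟩

end ProperIntervalPoset

theorem stmt11 {C : Type u} [Category.{v} C] (n : ℕ) (hn : 2 ≤ n)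
    (F : IntervalPoset n ⥤ C) (hF : PullbackProperty F) :
    Nonempty (IsLimit (properCone F)) := by
  have hn1 : 1 ≤ n := by omega
  have hpb := hF 0 ⟨1, by omega⟩ ⟨n - 1, by omega⟩ (Fin.last n) (Fin.zero_le _)
    (by simp [Fin.le_def]; omega) (Fin.le_last _)
  exact ⟨(properCone F).isLimitOfIsPullback (a := ProperIntervalPoset.dropLast hn1)
    (b := ProperIntervalPoset.dropFirst hn1) (c := ProperIntervalPoset.dropFirstLast hn)
    ⟨Fin.zero_le _, le_rfl⟩ ⟨le_rfl, Fin.le_last _⟩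
    (ProperIntervalPoset.dropLast_le_or_dropFirst_le hn1) hpb⟩
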